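/- arXiv:2108.02716 — 5 statements merged into one kernel-verified Lean document; each statement's English description precedes it below -/
import Mathlib

section
/- Let N be a natural number, G a finite index set, and c : G → ℝ with c_g ≥ 0 for all g. If x, x' : G → ℝ satisfy 0 ≤ x_g ≤ x'_g for all g ∈ G, then f_N(Σ_{g∈G} x_g · c_g) ≤ f_N(Σ_{g∈G} x'_g · c_g). In particular, the UE access-limited blockage probability is a monotonically increasing function of the cell coverage indicators and of the per-grid UE densities (which enter through the nonnegative weights c_g). -/
/-!
Write `f_N(μ) = E[g(X)]` with `X ~ Poisson(μ)` and `g(i) = (i - N)/i` for `i > N`, `g(i) = 0`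
otherwise; `g` is nondecreasing and bounded. For `μ ≤ μ'`, superposition gives
`Poisson(μ') = Poisson(μ) ∗ Poisson(μ' - μ)`, i.e. `X' = X + Y` with `Y ≥ 0`, so
`E[g(X)] ≤ E[g(X + Y)] = E[g(X')]`.
-/

/-- The UE access-limited blockage function
`f_N(μ) = Σ_{i=N+1}^{∞} (μ^i / i!) · e^{−μ} · (i − N)/i`. -/
noncomputable def ueBlock (N : ℕ) (μ : ℝ) : ℝ :=
  ∑' i : ℕ, if N < i then
    (μ ^ i / (Nat.factorial i : ℝ)) * Real.exp (-μ) * (((i : ℝ) - (N : ℝ)) / (i : ℝ))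
  else 0

open MeasureTheory ProbabilityTheory
open scoped NNReal Nat

/-- Fraction of `i` competing users left unserved by `N` RF chains. -/
noncomputable def blockedFraction (N i : ℕ) : ℝ :=
  if N < i then ((i : ℝ) - N) / i else 0

lemma blockedFraction_nonneg (N i : ℕ) : 0 ≤ blockedFraction N i := by
  unfold blockedFraction
  split_ifs with h
  · have hNi : (N : ℝ) ≤ i := by exact_mod_cast h.le
    exact div_nonneg (sub_nonneg.2 hNi) i.cast_nonneg
  · exact le_rfl

lemma norm_blockedFraction_le_one (N i : ℕ) : ‖blockedFraction N i‖ ≤ 1 := by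
  rw [Real.norm_of_nonneg (blockedFraction_nonneg N i), blockedFraction]
  split_ifs with h
  · have hi : (0 : ℝ) < i := by exact_mod_cast N.zero_le.trans_lt h
    rw [div_le_one hi]
    linarith [(N.cast_nonneg : (0 : ℝ) ≤ N)]
  · exact zero_le_one

lemma monotone_blockedFraction (N : ℕ) : Monotone (blockedFraction N) := by
  intro i j hij
  by_cases hi : N < i
  · have hj : N < j := hi.trans_le hij
    have hi₀ : (0 : ℝ) < i := by exact_mod_cast N.zero_le.trans_lt hi
    have hj₀ : (0 : ℝ) < j := by exact_mod_cast N.zero_le.trans_lt hj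
    have hij' : (i : ℝ) ≤ j := by exact_mod_cast hij
    rw [blockedFraction, blockedFraction, if_pos hi, if_pos hj, div_le_div_iff₀ hi₀ hj₀]
    nlinarith [(N.cast_nonneg : (0 : ℝ) ≤ N)]
  · rw [blockedFraction, if_neg hi]
    exact blockedFraction_nonneg N j

lemma ueBlock_coe_eq_integral (N : ℕ) (r : ℝ≥0) :
    ueBlock N r = ∫ n, blockedFraction N n ∂Po(r) := by
  rw [integral_poissonMeasure, ueBlock]
  refine tsum_congr fun i => ?_
  unfold blockedFraction
  split_ifs <;> simp only [smul_eq_mul, mul_zero]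
  ring

lemma integrable_of_norm_le_const {α : Type*} [MeasurableSpace α] [DiscreteMeasurableSpace α]
    [Countable α] {ρ : Measure α} [IsFiniteMeasure ρ] {g : α → ℝ} {C : ℝ}
    (hg : ∀ a, ‖g a‖ ≤ C) : Integrable g ρ :=
  .of_bound .of_discrete C (.of_forall hg)

lemma integral_le_integral_conv_of_monotone {μ ν : Measure ℕ} [IsFiniteMeasure μ]
    [IsProbabilityMeasure ν] {f : ℕ → ℝ} (hf : Monotone f) {C : ℝ} (hC : ∀ n, ‖f n‖ ≤ C) :
    ∫ n, f n ∂μ ≤ ∫ n, f n ∂(μ ∗ ν) := by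
  have hshift : ∀ m, ‖∫ n, f (m + n) ∂ν‖ ≤ C := fun m =>
    norm_integral_le_of_norm_le_const (.of_forall fun n => hC (m + n)) |>.trans_eq (by simp)
  rw [integral_conv (integrable_of_norm_le_const hC)]
  calc ∫ m, f m ∂μ = ∫ m, ∫ _, f m ∂ν ∂μ := by simp
    _ ≤ ∫ m, ∫ n, f (m + n) ∂ν ∂μ :=
      integral_mono (by simpa using integrable_of_norm_le_const hC)
        (integrable_of_norm_le_const hshift)
        fun m => integral_mono (by simp) (integrable_of_norm_le_const fun n => hC (m + n))
          fun n => hf (Nat.le_add_right m n)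

lemma monotone_integral_poissonMeasure {f : ℕ → ℝ} (hf : Monotone f) {C : ℝ}
    (hC : ∀ n, ‖f n‖ ≤ C) : Monotone fun r : ℝ≥0 => ∫ n, f n ∂Po(r) := by
  intro r r' hrr'
  dsimp only
  rw [show r' = r + (r' - r) from (add_tsub_cancel_of_le hrr').symm,
    ← poissonMeasure_conv_poissonMeasure]
  exact integral_le_integral_conv_of_monotone hf hC

lemma ueBlock_monotoneOn (N : ℕ) : MonotoneOn (ueBlock N) (Set.Ici 0) := by
  intro μ hμ μ' hμ' hle
  lift μ to ℝ≥0 using hμ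
  lift μ' to ℝ≥0 using hμ'
  rw [ueBlock_coe_eq_integral, ueBlock_coe_eq_integral]
  exact monotone_integral_poissonMeasure (monotone_blockedFraction N)
    (norm_blockedFraction_le_one N) (by exact_mod_cast hle)

/-- The UE access-limited blockage probability is a monotonically increasing function of
the cell coverage indicators and of the per-grid UE densities. -/
theorem stmt1 {G : Type*} [Fintype G] (N : ℕ) (c : G → ℝ) (hc : ∀ g, 0 ≤ c g)
    (x x' : G → ℝ) (hx : ∀ g, 0 ≤ x g) (hxx' : ∀ g, x g ≤ x' g) :
    ueBlock N (∑ g, x g * c g) ≤ ueBlock N (∑ g, x' g * c g) := by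
  have hle : ∑ g, x g * c g ≤ ∑ g, x' g * c g :=
    Finset.sum_le_sum fun g _ => mul_le_mul_of_nonneg_right (hxx' g) (hc g)
  have hμ : 0 ≤ ∑ g, x g * c g := Finset.sum_nonneg fun g _ => mul_nonneg (hx g) (hc g)
  exact ueBlock_monotoneOn N hμ (hμ.trans hle) hle
end

section
/- For every natural number N and every real number μ, the function f_N has derivative at μ equal to D_N(μ) = e^{−μ} · ( μ^N / (N+1)! + Σ_{i=N+1}^{∞} (μ^i / i!) · ( N/i − N/(i+1) ) ). Moreover, for every μ ≥ 0 one has D_N(μ) ≥ 0. -/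
/-!
Writing `f_N(μ) = e^{-μ} g(μ)` with the entire power series
`g(μ) = Σ_{i>N} (i - N)/(i · i!) μ^i`, whose coefficients are dominated by those of `exp`
and which may therefore be differentiated termwise, the derivative is `e^{-μ} (g'(μ) - g(μ))`.
Comparing coefficients of `μ^i` in `g' - g` gives `1/(N+1)!` for `i = N`,
`(1/i!) (N/i - N/(i+1))` for `i > N` and `0` below `N`; every one of these is
nonnegative.
-/

open Real Nat

/-- `D_N(μ) = e^{−μ}·(μ^N/(N+1)! + Σ_{i=N+1}^∞ (μ^i/i!)·(N/i − N/(i+1)))`. -/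
noncomputable def ueBlockDeriv (N : ℕ) (μ : ℝ) : ℝ :=
  Real.exp (-μ) * (μ ^ N / (Nat.factorial (N + 1) : ℝ) +
    ∑' i : ℕ, if N < i then
      μ ^ i / (Nat.factorial i : ℝ) * ((N : ℝ) / (i : ℝ) - (N : ℝ) / ((i : ℝ) + 1))
    else 0)

section ExpBoundedPowerSeries

variable {a : ℕ → ℝ}

theorem summable_mul_pow_of_abs_le_inv_factorial (ha : ∀ i, |a i| ≤ (i ! : ℝ)⁻¹) (x : ℝ) :
    Summable fun i => a i * x ^ i := by
  refine .of_norm_bounded (Real.summable_pow_div_factorial |x|) fun i => ?_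
  rw [norm_mul, norm_pow, Real.norm_eq_abs, Real.norm_eq_abs, div_eq_inv_mul]
  exact mul_le_mul_of_nonneg_right (ha i) (by positivity)

theorem abs_succ_mul_succ_le_inv_factorial (ha : ∀ i, |a i| ≤ (i ! : ℝ)⁻¹) (i : ℕ) :
    |(i + 1 : ℝ) * a (i + 1)| ≤ (i ! : ℝ)⁻¹ := by
  have hpos : (0 : ℝ) < i + 1 := by positivity
  calc |(i + 1 : ℝ) * a (i + 1)| ≤ (i + 1) * ((i + 1).factorial : ℝ)⁻¹ := by
        rw [abs_mul, abs_of_pos hpos]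
        exact mul_le_mul_of_nonneg_left (ha _) hpos.le
    _ = (i ! : ℝ)⁻¹ := by
        rw [Nat.factorial_succ, Nat.cast_mul, mul_inv, ← mul_assoc]
        push_cast
        rw [mul_inv_cancel₀ hpos.ne', one_mul]

theorem hasDerivAt_tsum_mul_pow_of_abs_le_inv_factorial (ha : ∀ i, |a i| ≤ (i ! : ℝ)⁻¹)
    (x : ℝ) :
    HasDerivAt (fun y => ∑' i, a i * y ^ i) (∑' i : ℕ, (i + 1 : ℝ) * a (i + 1) * x ^ i) x := by
  have hball : x ∈ Metric.ball (0 : ℝ) (|x| + 1) := by simp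
  have htail : HasDerivAt (fun y => ∑' i, a (i + 1) * y ^ (i + 1))
      (∑' i : ℕ, (i + 1 : ℝ) * a (i + 1) * x ^ i) x := by
    have hsum : Summable fun i => a (i + 1) * x ^ (i + 1) :=
      (summable_nat_add_iff (f := fun i => a i * x ^ i) 1).2
        (summable_mul_pow_of_abs_le_inv_factorial ha x)
    refine hasDerivAt_tsum_of_isPreconnected (g := fun i y => a (i + 1) * y ^ (i + 1))
      (g' := fun i y => (i + 1 : ℝ) * a (i + 1) * y ^ i)
      (Real.summable_pow_div_factorial (|x| + 1))
      Metric.isOpen_ball (convex_ball _ _).isPreconnected (fun i y _ => ?_) (fun i y hy => ?_)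
      hball hsum hball
    · refine ((hasDerivAt_pow (i + 1) y).const_mul (a (i + 1))).congr_deriv ?_
      push_cast
      ring
    · rw [mem_ball_zero_iff, Real.norm_eq_abs] at hy
      rw [norm_mul, norm_pow, Real.norm_eq_abs, Real.norm_eq_abs, div_eq_inv_mul]
      exact mul_le_mul (abs_succ_mul_succ_le_inv_factorial ha i)
        (pow_le_pow_left₀ (abs_nonneg y) hy.le i) (by positivity) (by positivity)
  have hsplit : (fun y => ∑' i, a i * y ^ i) =
      fun y => a 0 + ∑' i, a (i + 1) * y ^ (i + 1) := by
    funext y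
    rw [(summable_mul_pow_of_abs_le_inv_factorial ha y).tsum_eq_zero_add, pow_zero, mul_one]
  rw [hsplit]
  exact htail.const_add (a 0)

end ExpBoundedPowerSeries

namespace UEBlock

/-- The coefficients of `e^{μ} f_N(μ)` as a power series in `μ`. -/
noncomputable def coeff (N i : ℕ) : ℝ :=
  if N < i then ((i : ℝ) - N) / i / i ! else 0

theorem abs_coeff_le (N i : ℕ) : |coeff N i| ≤ (i ! : ℝ)⁻¹ := by
  unfold coeff
  split_ifs with h
  · have hi : (0 : ℝ) < i := by exact_mod_cast Nat.zero_lt_of_lt h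
    have hNi : (N : ℝ) < i := by exact_mod_cast h
    have hratio_nonneg : 0 ≤ ((i : ℝ) - N) / i := div_nonneg (by linarith) hi.le
    have hratio_le_one : ((i : ℝ) - N) / i ≤ 1 :=
      (div_le_one hi).2 (by linarith [(N.cast_nonneg : (0 : ℝ) ≤ N)])
    rw [abs_of_nonneg (by positivity), div_eq_mul_inv]
    exact mul_le_of_le_one_left (by positivity) hratio_le_one
  · simp

theorem ueBlock_eq (N : ℕ) : ueBlock N = fun μ => exp (-μ) * ∑' i, coeff N i * μ ^ i := by
  funext μ
  rw [ueBlock, ← tsum_mul_left]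
  congr 1
  funext i
  unfold coeff
  split_ifs <;> ring

theorem succ_mul_coeff_succ_sub_coeff (N i : ℕ) (μ : ℝ) :
    (i + 1 : ℝ) * coeff N (i + 1) * μ ^ i - coeff N i * μ ^ i =
      (if i = N then μ ^ N / ((N + 1).factorial : ℝ) else 0) +
      (if N < i then μ ^ i / (i ! : ℝ) * ((N : ℝ) / (i : ℝ) - (N : ℝ) / ((i : ℝ) + 1)) else 0) := by
  have hfac : ((i + 1).factorial : ℝ) = (i + 1) * i ! := by push_cast [Nat.factorial_succ]; ring
  unfold coeff
  rcases lt_trichotomy i N with h | rfl | h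
  · simp [h.ne, h.not_gt, show ¬N < i + 1 by omega]
  · simp only [lt_add_one, if_true, lt_irrefl, if_false]
    rw [hfac]
    push_cast
    field_simp
    ring
  · have hi : (i : ℝ) ≠ 0 := by exact_mod_cast (Nat.zero_lt_of_lt h).ne'
    simp only [h, h.ne', show N < i + 1 by omega, if_true, if_false]
    rw [hfac]
    push_cast
    field_simp
    ring

theorem tsum_succ_mul_coeff_succ_sub_tsum_coeff (N : ℕ) (μ : ℝ) :
    ∑' i : ℕ, (i + 1 : ℝ) * coeff N (i + 1) * μ ^ i - ∑' i, coeff N i * μ ^ i =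
      μ ^ N / ((N + 1).factorial : ℝ) +
      ∑' i : ℕ, (if N < i then
        μ ^ i / (i ! : ℝ) * ((N : ℝ) / (i : ℝ) - (N : ℝ) / ((i : ℝ) + 1)) else 0) := by
  have hderiv := summable_mul_pow_of_abs_le_inv_factorial
    (abs_succ_mul_succ_le_inv_factorial (abs_coeff_le N)) μ
  have hcoeff := summable_mul_pow_of_abs_le_inv_factorial (abs_coeff_le N) μ
  have hpeak := (hasSum_ite_eq N (μ ^ N / ((N + 1).factorial : ℝ))).summable
  have htail : Summable fun i : ℕ => if N < i then
      μ ^ i / (i ! : ℝ) * ((N : ℝ) / (i : ℝ) - (N : ℝ) / ((i : ℝ) + 1)) else 0 :=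
    ((hderiv.sub hcoeff).sub hpeak).congr fun i => by
      simp only [succ_mul_coeff_succ_sub_coeff]
      ring
  rw [← hderiv.tsum_sub hcoeff]
  simp only [succ_mul_coeff_succ_sub_coeff]
  rw [hpeak.tsum_add htail, tsum_ite_eq]

end UEBlock

open UEBlock in
theorem hasDerivAt_ueBlock (N : ℕ) (μ : ℝ) : HasDerivAt (ueBlock N) (ueBlockDeriv N μ) μ := by
  have hexp : HasDerivAt (fun x => exp (-x)) (-exp (-μ)) μ := by
    simpa using (hasDerivAt_neg μ).exp
  rw [ueBlock_eq]
  refine (hexp.mul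
    (hasDerivAt_tsum_mul_pow_of_abs_le_inv_factorial (abs_coeff_le N) μ)).congr_deriv ?_
  rw [ueBlockDeriv, ← tsum_succ_mul_coeff_succ_sub_tsum_coeff]
  ring

theorem ueBlockDeriv_nonneg (N : ℕ) {μ : ℝ} (hμ : 0 ≤ μ) : 0 ≤ ueBlockDeriv N μ := by
  refine mul_nonneg (exp_pos _).le (add_nonneg (by positivity) (tsum_nonneg fun i => ?_))
  split_ifs with h
  · have hi : (0 : ℝ) < i := by exact_mod_cast Nat.zero_lt_of_lt h
    exact mul_nonneg (by positivity)
      (sub_nonneg.2 (div_le_div_of_nonneg_left N.cast_nonneg hi (by linarith)))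
  · exact le_rfl

/-- `f_N` has derivative `D_N(μ)` at every `μ`, and `D_N(μ) ≥ 0` for every `μ ≥ 0`. -/
theorem stmt3 (N : ℕ) :
    (∀ μ : ℝ, HasDerivAt (ueBlock N) (ueBlockDeriv N μ) μ) ∧
    (∀ μ : ℝ, 0 ≤ μ → 0 ≤ ueBlockDeriv N μ) :=
  ⟨hasDerivAt_ueBlock N, fun _ => ueBlockDeriv_nonneg N⟩
end

section
/- For every natural number N and all real numbers μ₁, μ₂ with 0 ≤ μ₁ < μ₂, one has f_N(μ₁) < f_N(μ₂); that is, f_N is strictly increasing on [0, ∞). -/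
open Real Nat

lemma succ_mul_pow_div_factorial_succ (x : ℝ) (i : ℕ) :
    ((i + 1 : ℕ) : ℝ) * x ^ i / (i + 1)! = x ^ i / i ! := by
  rw [factorial_succ, cast_mul, mul_div_mul_left _ _ (by positivity)]

section ExpGeneratingFunction

variable {c : ℕ → ℝ} {C : ℝ}

lemma summable_mul_pow_div_factorial (hc : ∀ i, |c i| ≤ C) (x : ℝ) :
    Summable fun i => c i * x ^ i / i ! := by
  refine .of_norm_bounded ((Real.summable_pow_div_factorial |x|).mul_left C) fun i => ?_
  rw [norm_eq_abs, abs_div, abs_mul, abs_pow, Nat.abs_cast, mul_div_assoc]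
  gcongr
  exact hc i

lemma summable_nat_mul_pow_sub_one_div_factorial (x : ℝ) :
    Summable fun i : ℕ => (i : ℝ) * x ^ (i - 1) / i ! := by
  rw [← summable_nat_add_iff 1]
  simpa only [add_tsub_cancel_right, succ_mul_pow_div_factorial_succ]
    using Real.summable_pow_div_factorial x

lemma tsum_mul_nat_mul_pow_sub_one_div_factorial (hc : ∀ i, |c i| ≤ C) (x : ℝ) :
    ∑' i, c i * ((i : ℝ) * x ^ (i - 1) / i !) = ∑' i, c (i + 1) * x ^ i / i ! := by
  have hs : Summable fun i => c i * ((i : ℝ) * x ^ (i - 1) / i !) := by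
    refine .of_norm_bounded ((summable_nat_mul_pow_sub_one_div_factorial |x|).mul_left C)
      fun i => ?_
    rw [norm_eq_abs, abs_mul, abs_div, abs_mul, abs_pow, Nat.abs_cast, Nat.abs_cast]
    gcongr
    exact hc i
  rw [hs.tsum_eq_zero_add, cast_zero, zero_mul, zero_div, mul_zero, zero_add]
  refine tsum_congr fun i => ?_
  rw [add_tsub_cancel_right, succ_mul_pow_div_factorial_succ, mul_div_assoc]

lemma hasDerivAt_tsum_mul_pow_div_factorial (hc : ∀ i, |c i| ≤ C) (x : ℝ) :
    HasDerivAt (fun y => ∑' i, c i * y ^ i / i !) (∑' i, c (i + 1) * x ^ i / i !) x := by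
  set R := |x| + 1
  have hx : x ∈ Set.Ioo (-R) R := abs_lt.mp (lt_add_one _)
  have hderiv (i : ℕ) (y : ℝ) :
      HasDerivAt (fun y => c i * y ^ i / i !) (c i * ((i : ℝ) * y ^ (i - 1) / i !)) y := by
    simpa only [mul_div_assoc] using ((hasDerivAt_pow i y).div_const (i ! : ℝ)).const_mul (c i)
  have hbound (i : ℕ) (y : ℝ) (hy : y ∈ Set.Ioo (-R) R) :
      ‖c i * ((i : ℝ) * y ^ (i - 1) / i !)‖ ≤ C * ((i : ℝ) * R ^ (i - 1) / i !) := by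
    rw [norm_eq_abs, abs_mul, abs_div, abs_mul, abs_pow, Nat.abs_cast, Nat.abs_cast]
    have := abs_lt.mpr hy
    gcongr
    · exact (abs_nonneg _).trans (hc i)
    · exact hc i
  rw [← tsum_mul_nat_mul_pow_sub_one_div_factorial hc]
  exact hasDerivAt_tsum_of_isPreconnected
    ((summable_nat_mul_pow_sub_one_div_factorial R).mul_left C) isOpen_Ioo
    isPreconnected_Ioo (fun i y _ => hderiv i y) hbound hx
    (summable_mul_pow_div_factorial hc x) hx

lemma hasDerivAt_exp_neg_mul_tsum (hc : ∀ i, |c i| ≤ C) (x : ℝ) :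
    HasDerivAt (fun y => exp (-y) * ∑' i, c i * y ^ i / i !)
      (exp (-x) * ∑' i, (c (i + 1) - c i) * x ^ i / i !) x := by
  have hexp : HasDerivAt (fun y => exp (-y)) (-exp (-x)) x := by
    convert (hasDerivAt_neg x).exp using 1
    ring
  refine (hexp.mul (hasDerivAt_tsum_mul_pow_div_factorial hc x)).congr_deriv ?_
  simp only [sub_mul, sub_div]
  rw [(summable_mul_pow_div_factorial (fun i => hc (i + 1)) x).tsum_sub
    (summable_mul_pow_div_factorial hc x)]
  ring

theorem strictMonoOn_exp_neg_mul_tsum (hc : ∀ i, |c i| ≤ C) (hmono : Monotone c) {k : ℕ}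
    (hk : c k < c (k + 1)) :
    StrictMonoOn (fun y => exp (-y) * ∑' i, c i * y ^ i / i !) (Set.Ici 0) := by
  have hderiv := hasDerivAt_exp_neg_mul_tsum hc
  refine strictMonoOn_of_deriv_pos (convex_Ici 0)
    (Differentiable.continuous (fun x => (hderiv x).differentiableAt)).continuousOn fun x hx => ?_
  rw [interior_Ici, Set.mem_Ioi] at hx
  rw [(hderiv x).deriv]
  refine mul_pos (exp_pos _) <| Summable.tsum_pos ?_ (fun i => ?_) k ?_
  · exact summable_mul_pow_div_factorial (C := 2 * C) (fun i => by
      have := abs_sub (c (i + 1)) (c i); linarith [hc i, hc (i + 1)]) x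
  · have := sub_nonneg.mpr (hmono i.le_succ)
    positivity
  · have := sub_pos.mpr hk
    positivity

end ExpGeneratingFunction

noncomputable def ueWeight (N i : ℕ) : ℝ :=
  if N < i then ((i : ℝ) - N) / i else 0

lemma abs_ueWeight_le_one (N i : ℕ) : |ueWeight N i| ≤ 1 := by
  unfold ueWeight
  split_ifs with h
  · have hNi : (N : ℝ) < i := by exact_mod_cast h
    rw [abs_of_nonneg (div_nonneg (by linarith) (by positivity))]
    exact div_le_one_of_le₀ (by linarith [N.cast_nonneg (α := ℝ)]) (by positivity)
  · simp

lemma ueWeight_lt_succ (N : ℕ) : ueWeight N N < ueWeight N (N + 1) := by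
  simp only [ueWeight, lt_irrefl, if_false, lt_add_one, if_true]
  push_cast
  rw [add_sub_cancel_left]
  positivity

lemma monotone_ueWeight (N : ℕ) : Monotone (ueWeight N) := by
  refine monotone_nat_of_le_succ fun i => ?_
  rcases lt_trichotomy i N with h | rfl | h
  · simp [ueWeight, h.not_gt, Nat.succ_le_of_lt h |>.not_gt]
  · exact (ueWeight_lt_succ i).le
  · have hi : (N : ℝ) < i := by exact_mod_cast h
    simp only [ueWeight, h, h.trans (lt_add_one i), if_true]
    rw [div_le_div_iff₀ (by linarith [N.cast_nonneg (α := ℝ)]) (by positivity)]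
    push_cast
    nlinarith [N.cast_nonneg (α := ℝ)]

lemma ueBlock_eq_exp_neg_mul_tsum (N : ℕ) (μ : ℝ) :
    ueBlock N μ = exp (-μ) * ∑' i, ueWeight N i * μ ^ i / i ! := by
  rw [ueBlock, ← tsum_mul_left]
  refine tsum_congr fun i => ?_
  unfold ueWeight
  split_ifs <;> ring

/-- `f_N` is strictly increasing on `[0, ∞)`. -/
theorem stmt4 (N : ℕ) (μ₁ μ₂ : ℝ) (h₀ : 0 ≤ μ₁) (h₁ : μ₁ < μ₂) :
    ueBlock N μ₁ < ueBlock N μ₂ := by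
  simp only [ueBlock_eq_exp_neg_mul_tsum]
  exact strictMonoOn_exp_neg_mul_tsum (abs_ueWeight_le_one N) (monotone_ueWeight N)
    (ueWeight_lt_succ N) h₀ (h₀.trans h₁.le) h₁
end

section
/- Let B be a finite index set; let σ² > 0, z > 0, N ≥ 1 be real numbers; for each b ∈ B let P_b ≥ 0, C_b ≥ 0, y_b ∈ {0,1}, p_b ∈ [0,1] be real numbers; and let γ ∈ (0,1]. For x : B → {0,1} define S_b(x) = (x_b·P_b) / ( σ² + Σ_{i∈B} y_i·(1 − x_i/N)·C_i ), q_b(x) = (1 − p_b) · [1 if S_b(x) < z, else 0], and F(x) = Σ_{b∈B} x_b · log( p_b + γ·(1 − p_b) + (1 − γ)·q_b(x) ). Then F is antitone in the association vector: if x, x' : B → {0,1} satisfy x_i ≤ x'_i for all i ∈ B, then F(x') ≤ F(x). That is, for a fixed BS deployment vector, the left-hand side of the UE outage constraint is a monotonically decreasing function of the macro diversity order. -/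
/-- For a fixed BS deployment vector, the left-hand side of the UE outage constraint,
`F(x) = Σ_b x_b · log(p_b + γ(1−p_b) + (1−γ)·q_b(x))` with
`q_b(x) = (1−p_b)·𝟙{S_b(x) < z}` and
`S_b(x) = x_b·P_b / (σ² + Σ_i y_i·(1 − x_i/N)·C_i)`,
is a monotonically decreasing function of the macro diversity order. -/
theorem stmt9 {B : Type*} [Fintype B] (σ2 z N : ℝ) (hσ : 0 < σ2) (hz : 0 < z) (hN : 1 ≤ N)
    (P C y p : B → ℝ) (hP : ∀ b, 0 ≤ P b) (hC : ∀ b, 0 ≤ C b)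
    (hy : ∀ b, y b = 0 ∨ y b = 1) (hp0 : ∀ b, 0 ≤ p b) (hp1 : ∀ b, p b ≤ 1)
    (γ : ℝ) (hγ0 : 0 < γ) (hγ1 : γ ≤ 1)
    (x x' : B → ℝ) (hx : ∀ i, x i = 0 ∨ x i = 1) (hx' : ∀ i, x' i = 0 ∨ x' i = 1)
    (hxx' : ∀ i, x i ≤ x' i) :
    ∑ b, x' b * Real.log (p b + γ * (1 - p b) + (1 - γ) *
        ((1 - p b) * (if (x' b * P b) / (σ2 + ∑ i, y i * (1 - x' i / N) * C i) < z
          then (1 : ℝ) else 0))) ≤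
      ∑ b, x b * Real.log (p b + γ * (1 - p b) + (1 - γ) *
        ((1 - p b) * (if (x b * P b) / (σ2 + ∑ i, y i * (1 - x i / N) * C i) < z
          then (1 : ℝ) else 0))) := by
  have hN0 : 0 < N := lt_of_lt_of_le one_pos hN
  -- positivity of denominators
  have hden : ∀ w : B → ℝ, (∀ i, w i = 0 ∨ w i = 1) →
      0 < σ2 + ∑ i, y i * (1 - w i / N) * C i := by
    intro w hw
    have : 0 ≤ ∑ i, y i * (1 - w i / N) * C i := by
      apply Finset.sum_nonneg
      intro i _
      have hyi : 0 ≤ y i := by rcases hy i with h | h <;> simp [h]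
      have hwi : w i ≤ 1 := by rcases hw i with h | h <;> simp [h]
      have : w i / N ≤ 1 := by rw [div_le_one hN0]; linarith
      exact mul_nonneg (mul_nonneg hyi (by linarith)) (hC i)
    linarith
  have hdx : 0 < σ2 + ∑ i, y i * (1 - x i / N) * C i := hden x hx
  have hdx' : 0 < σ2 + ∑ i, y i * (1 - x' i / N) * C i := hden x' hx'
  -- denominator for x' is ≤ denominator for x
  have hdle : σ2 + ∑ i, y i * (1 - x' i / N) * C i ≤ σ2 + ∑ i, y i * (1 - x i / N) * C i := by
    have : ∑ i, y i * (1 - x' i / N) * C i ≤ ∑ i, y i * (1 - x i / N) * C i := by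
      apply Finset.sum_le_sum
      intro i _
      have hyi : 0 ≤ y i := by rcases hy i with h | h <;> simp [h]
      have hd : (1 - x' i / N) ≤ (1 - x i / N) := by
        have h := (div_le_div_iff_of_pos_right hN0).mpr (hxx' i)
        linarith
      exact mul_le_mul_of_nonneg_right (mul_le_mul_of_nonneg_left hd hyi) (hC i)
    linarith
  -- positivity / bounds of log arguments
  have harg_pos : ∀ b (t : ℝ), 0 ≤ t →
      0 < p b + γ * (1 - p b) + (1 - γ) * ((1 - p b) * t) := by
    intro b t ht
    have h1 : γ ≤ p b + γ * (1 - p b) := by nlinarith [hp0 b, hp1 b]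
    have h2 : 0 ≤ (1 - γ) * ((1 - p b) * t) :=
      mul_nonneg (by linarith) (mul_nonneg (by linarith [hp1 b]) ht)
    linarith
  have harg_le1 : ∀ b (t : ℝ), t ≤ 1 → 0 ≤ t →
      p b + γ * (1 - p b) + (1 - γ) * ((1 - p b) * t) ≤ 1 := by
    intro b t ht1 ht0
    have h1 : 0 ≤ 1 - p b := by linarith [hp1 b]
    have h2 : γ + (1 - γ) * t ≤ 1 := by nlinarith
    nlinarith [mul_le_mul_of_nonneg_left h2 h1]
  apply Finset.sum_le_sum
  intro b _
  rcases hx b with hb0 | hb1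
  · -- x b = 0, LHS term ≤ 0 = RHS term
    rw [hb0, zero_mul]
    have hind' : (if (x' b * P b) / (σ2 + ∑ i, y i * (1 - x' i / N) * C i) < z
        then (1:ℝ) else 0) = 0 ∨ (if (x' b * P b) / (σ2 + ∑ i, y i * (1 - x' i / N) * C i) < z
        then (1:ℝ) else 0) = 1 := by split <;> simp
    apply mul_nonpos_of_nonneg_of_nonpos
    · rcases hx' b with h | h <;> simp [h]
    · apply Real.log_nonpos
      · rcases hind' with h | h <;> rw [h]
        · exact le_of_lt (harg_pos b 0 le_rfl)
        · exact le_of_lt (harg_pos b 1 zero_le_one)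
      · rcases hind' with h | h <;> rw [h]
        · exact harg_le1 b 0 zero_le_one le_rfl
        · exact harg_le1 b 1 le_rfl zero_le_one
  · -- x b = 1, hence x' b = 1
    have hb1' : x' b = 1 := by
      rcases hx' b with h | h
      · exfalso; have := hxx' b; rw [hb1, h] at this; linarith
      · exact h
    rw [hb1, hb1']
    simp only [one_mul]
    set t' : ℝ := if P b / (σ2 + ∑ i, y i * (1 - x' i / N) * C i) < z then 1 else 0 with ht'
    set t : ℝ := if P b / (σ2 + ∑ i, y i * (1 - x i / N) * C i) < z then 1 else 0 with ht
    have ht'b : 0 ≤ t' := by rw [ht']; split <;> norm_num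
    have htle : t' ≤ t := by
      rw [ht', ht]
      split
      · split
        · exact le_rfl
        · rename_i h1 h2
          exfalso
          apply h2
          calc (P b) / (σ2 + ∑ i, y i * (1 - x i / N) * C i)
              ≤ (P b) / (σ2 + ∑ i, y i * (1 - x' i / N) * C i) :=
                div_le_div_of_nonneg_left (hP b) hdx' hdle
            _ < z := h1
      · split <;> norm_num
    apply Real.log_le_log (harg_pos b t' ht'b)
    have h1 : 0 ≤ 1 - p b := by linarith [hp1 b]
    have h2 := mul_le_mul_of_nonneg_left htle h1
    have h3 := mul_le_mul_of_nonneg_left h2 (show (0:ℝ) ≤ 1 - γ by linarith)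
    linarith
end

section
/- Let B be a finite index set and for each b ∈ B let y_b, Λ_b, s_b ∈ {0,1} be real numbers with s_b ≤ y_b·Λ_b, and let p_b ∈ [0,1] and γ ∈ [0,1] be real numbers. Then Σ_{b∈B} y_b·Λ_b · log( p_b + γ·(1 − p_b) + (1 − γ)·(1 − p_b)·(1 − s_b) ) = Σ_{b∈B} s_b · log( p_b + γ·(1 − p_b) ). Consequently, the nonlinear UE outage constraint can be replaced by the linear constraint Σ_b s_b·log(p_b + γ(1 − p_b)) ≤ log ζ. -/
/-- Linearization of the UE outage constraint:
`Σ_b y_b·Λ_b·log(p_b + γ(1−p_b) + (1−γ)(1−p_b)(1−s_b)) = Σ_b s_b·log(p_b + γ(1−p_b))`. -/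
theorem stmt12 {B : Type*} [Fintype B] (y Λ s p : B → ℝ)
    (hy : ∀ b, y b = 0 ∨ y b = 1) (hΛ : ∀ b, Λ b = 0 ∨ Λ b = 1)
    (hs : ∀ b, s b = 0 ∨ s b = 1) (hsyΛ : ∀ b, s b ≤ y b * Λ b)
    (hp0 : ∀ b, 0 ≤ p b) (hp1 : ∀ b, p b ≤ 1)
    (γ : ℝ) (hγ0 : 0 ≤ γ) (hγ1 : γ ≤ 1) :
    ∑ b, y b * Λ b * Real.log (p b + γ * (1 - p b) + (1 - γ) * (1 - p b) * (1 - s b)) =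
      ∑ b, s b * Real.log (p b + γ * (1 - p b)) := by
  apply Finset.sum_congr rfl
  intro b _
  rcases hs b with h0 | h1
  · rcases hy b with hy0 | hy1
    · simp [hy0, h0]
    rcases hΛ b with hΛ0 | hΛ1
    · simp [hΛ0, h0]
    have : p b + γ * (1 - p b) + (1 - γ) * (1 - p b) * (1 - s b) = 1 := by
      rw [h0]; ring
    rw [this, Real.log_one, h0]; ring
  · have hyΛ : y b * Λ b = 1 := by
      have := hsyΛ b
      rcases hy b with h | h <;> rcases hΛ b with h' | h' <;>
        simp [h, h', h1] at this ⊢ <;> linarith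
    rw [hyΛ, h1]; ring_nf
end
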